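/- arXiv:1107.5671 — 3 statements merged into one kernel-verified Lean document; each statement's English description precedes it below -/
import Mathlib

section
/- Let (r^1,…,r^l) be a monotone sequence of reaction vectors realizing a response edge (x, x'), where each reaction has at least one strictly negative entry. Then l ≤ ∑_{k=1}^{n} max(0, x_k - x'_k); i.e., the length of the sequence is bounded by the total decrease between the two measured states. -/
theorem length_le_total_decrease (n l : ℕ) (x x' : Fin n → ℤ)
    (y : Fin (l + 1) → Fin n → ℤ) (r : Fin l → Fin n → ℤ)
    (hy0 : y 0 = x) (hyl : y (Fin.last l) = x')
    (hstep : ∀ i : Fin l, y i.succ = y i.castSucc + r i)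
    (hmono : ∀ i j : Fin l, ∀ k : Fin n, 0 ≤ r i k * r j k)
    (hneg : ∀ i : Fin l, ∃ k : Fin n, r i k < 0) :
    (l : ℤ) ≤ ∑ k : Fin n, max 0 (x k - x' k) := by
  classical
  -- telescoping sum
  have hsum : ∀ k : Fin n, ∑ i : Fin l, r i k = x' k - x k := by
    intro k
    have key : ∀ m : ℕ, (hm : m ≤ l) → ∑ i : Fin l, (if (i : ℕ) < m then r i k else 0)
        = y ⟨m, Nat.lt_succ_of_le hm⟩ k - x k := by
      intro m
      induction m with
      | zero =>
        intro _
        simp [hy0]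
      | succ m ih =>
        intro hm
        have hm' : m ≤ l := Nat.le_of_succ_le hm
        have hml : m < l := hm
        have step := hstep ⟨m, hml⟩
        have hsucc : (⟨m, hml⟩ : Fin l).succ = ⟨m + 1, Nat.lt_succ_of_le hm⟩ := rfl
        have hcast : (⟨m, hml⟩ : Fin l).castSucc = ⟨m, Nat.lt_succ_of_le hm'⟩ := rfl
        have hsplit : ∑ i : Fin l, (if (i : ℕ) < m + 1 then r i k else 0)
            = (∑ i : Fin l, (if (i : ℕ) < m then r i k else 0)) + r ⟨m, hml⟩ k := by
          have heach : ∀ i : Fin l, (if (i : ℕ) < m + 1 then r i k else 0)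
              = (if (i : ℕ) < m then r i k else 0)
                + (if i = ⟨m, hml⟩ then r i k else 0) := by
            intro i
            by_cases h1 : (i : ℕ) < m
            · have h2 : (i : ℕ) < m + 1 := Nat.lt_succ_of_lt h1
              have h3 : i ≠ ⟨m, hml⟩ := by
                intro he; rw [he] at h1; exact absurd h1 (lt_irrefl m)
              simp [h1, h2, h3]
            · by_cases h2 : (i : ℕ) = m
              · have h3 : i = ⟨m, hml⟩ := Fin.ext h2
                simp [h1, h2, h3]
              · have h4 : ¬ (i : ℕ) < m + 1 := by omega
                have h3 : i ≠ ⟨m, hml⟩ := by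
                  intro he; apply h2; rw [he]
                simp [h1, h4, h3]
          calc ∑ i : Fin l, (if (i : ℕ) < m + 1 then r i k else 0)
              = ∑ i : Fin l, ((if (i : ℕ) < m then r i k else 0)
                + (if i = ⟨m, hml⟩ then r i k else 0)) :=
                Finset.sum_congr rfl (fun i _ => heach i)
            _ = (∑ i : Fin l, (if (i : ℕ) < m then r i k else 0)) + r ⟨m, hml⟩ k := by
                rw [Finset.sum_add_distrib, Finset.sum_ite_eq' Finset.univ (⟨m, hml⟩ : Fin l)]
                simp
        rw [hsplit, ih hm']
        have := congrFun step k
        rw [hsucc, hcast] at this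
        simp only [Pi.add_apply] at this
        rw [this]
        ring
    have := key l le_rfl
    have hlast : (⟨l, Nat.lt_succ_of_le le_rfl⟩ : Fin (l+1)) = Fin.last l := rfl
    rw [hlast, hyl] at this
    have hall : ∑ i : Fin l, (if (i : ℕ) < l then r i k else 0) = ∑ i : Fin l, r i k := by
      apply Finset.sum_congr rfl
      intro i _
      simp [i.isLt]
    rw [hall] at this
    exact this
  -- counts
  set S : Fin n → Finset (Fin l) := fun k => Finset.univ.filter (fun i => r i k < 0) with hS
  have hcount : ∀ k : Fin n, ((S k).card : ℤ) ≤ max 0 (x k - x' k) := by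
    intro k
    by_cases hk : ∃ i : Fin l, r i k < 0
    · obtain ⟨i0, hi0⟩ := hk
      -- all entries in coordinate k are ≤ 0
      have hle : ∀ j : Fin l, r j k ≤ 0 := by
        intro j
        by_contra h
        push_neg at h
        have := hmono i0 j k
        nlinarith
      have h1 : ((S k).card : ℤ) ≤ ∑ i ∈ S k, (-(r i k)) := by
        have := Finset.card_nsmul_le_sum (S k) (fun i => -(r i k)) 1
            (by intro i hi
                simp only [hS, Finset.mem_filter] at hi
                show (1 : ℤ) ≤ -(r i k)
                omega)
        simpa using this
      have h2 : ∑ i ∈ S k, (-(r i k)) ≤ ∑ i : Fin l, (-(r i k)) := by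
        apply Finset.sum_le_sum_of_subset_of_nonneg (Finset.subset_univ _)
        intro i _ _
        linarith [hle i]
      have h3 : ∑ i : Fin l, (-(r i k)) = x k - x' k := by
        rw [Finset.sum_neg_distrib, hsum k]; ring
      have : ((S k).card : ℤ) ≤ x k - x' k := by linarith
      exact this.trans (le_max_right _ _)
    · push_neg at hk
      have : S k = ∅ := by
        apply Finset.filter_eq_empty_iff.mpr
        intro i _
        exact not_lt.mpr (le_of_not_gt (by exact fun h => absurd h (not_lt.mpr (hk i))))
      rw [this]
      simp
  -- cover
  have hcover : (Finset.univ : Finset (Fin l)) ⊆ Finset.univ.biUnion S := by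
    intro i _
    obtain ⟨k, hk⟩ := hneg i
    exact Finset.mem_biUnion.mpr ⟨k, Finset.mem_univ k, by simp [hS, hk]⟩
  have hl : l ≤ ∑ k : Fin n, (S k).card := by
    calc l = (Finset.univ : Finset (Fin l)).card := by simp
    _ ≤ (Finset.univ.biUnion S).card := Finset.card_le_card hcover
    _ ≤ ∑ k : Fin n, (S k).card := Finset.card_biUnion_le
  calc (l : ℤ) ≤ ∑ k : Fin n, ((S k).card : ℤ) := by exact_mod_cast hl
  _ ≤ ∑ k : Fin n, max 0 (x k - x' k) := Finset.sum_le_sum (fun k _ => hcount k)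
end

section
/- Let (r^1,…,r^l) be a monotone sequence of nonzero reaction vectors realizing a response edge (x, x'). Then l + 1 ≤ ∏_{k=1}^{n} (|x'_k - x_k| + 1). -/
theorem length_succ_le_box_card (n l : ℕ) (x x' : Fin n → ℤ)
    (y : Fin (l + 1) → Fin n → ℤ) (r : Fin l → Fin n → ℤ)
    (hy0 : y 0 = x) (hyl : y (Fin.last l) = x')
    (hstep : ∀ i : Fin l, y i.succ = y i.castSucc + r i)
    (hmono : ∀ i j : Fin l, ∀ k : Fin n, 0 ≤ r i k * r j k)
    (hnz : ∀ i : Fin l, r i ≠ 0) :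
    (l : ℤ) + 1 ≤ ∏ k : Fin n, (|x' k - x k| + 1) := by
  classical
  set g : Fin n → ℕ → ℤ := fun k t => if h : t < l then r ⟨t, h⟩ k else 0 with hg
  have key : ∀ m : ℕ, ∀ hm : m ≤ l, ∀ k, y ⟨m, Nat.lt_succ_of_le hm⟩ k
      = x k + ∑ t ∈ Finset.range m, g k t := by
    intro m
    induction m with
    | zero => intro hm k; simp [hy0, show (⟨0, Nat.lt_succ_of_le hm⟩ : Fin (l+1)) = 0 from rfl]
    | succ m ih =>
      intro hm k
      have hml : m < l := hm
      have h1 : (⟨m+1, Nat.lt_succ_of_le hm⟩ : Fin (l+1)) = (⟨m, hml⟩ : Fin l).succ := rfl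
      have h2 : (⟨m, Nat.lt_succ_of_le (le_of_lt hml)⟩ : Fin (l+1)) = (⟨m, hml⟩ : Fin l).castSucc := rfl
      rw [h1, hstep]
      simp only [Pi.add_apply]
      rw [← h2, ih (le_of_lt hml) k, Finset.sum_range_succ]
      simp [hg, hml]
      ring
  have hmul : ∀ k s t, 0 ≤ g k s * g k t := by
    intro k s t
    by_cases hs : s < l
    · by_cases ht : t < l
      · simpa [hg, hs, ht] using hmono ⟨s, hs⟩ ⟨t, ht⟩ k
      · simp [hg, ht]
    · simp [hg, hs]
  have hsign : ∀ k, (∀ t, 0 ≤ g k t) ∨ (∀ t, g k t ≤ 0) := by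
    intro k
    by_cases h : ∃ t, 0 < g k t
    · obtain ⟨t0, ht0⟩ := h
      left; intro t
      nlinarith [hmul k t t0]
    · push_neg at h
      right; intro t; exact h t
  have hlast : ∀ k, x' k - x k = ∑ t ∈ Finset.range l, g k t := by
    intro k
    have := key l le_rfl k
    rw [show (⟨l, Nat.lt_succ_of_le le_rfl⟩ : Fin (l+1)) = Fin.last l from rfl, hyl] at this
    linarith
  have hIco : ∀ (k : Fin n) {a b : ℕ}, a ≤ b → ∑ t ∈ Finset.range b, g k t
      = ∑ t ∈ Finset.range a, g k t + ∑ t ∈ Finset.Ico a b, g k t := by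
    intro k a b hab
    simp only [Finset.range_eq_Ico]
    exact (Finset.sum_Ico_consecutive _ (Nat.zero_le a) hab).symm
  have hkey' : ∀ i : Fin (l+1), ∀ k, y i k = x k + ∑ t ∈ Finset.range i.1, g k t := by
    intro i k
    have hi : (i:ℕ) ≤ l := Nat.lt_succ_iff.mp i.2
    have := key i.1 hi k
    rwa [show (⟨i.1, Nat.lt_succ_of_le hi⟩ : Fin (l+1)) = i from Fin.ext rfl] at this
  set B : Finset (Fin n → ℤ) :=
    Finset.Icc (fun k => min (x k) (x' k)) (fun k => max (x k) (x' k)) with hB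
  have hbound : ∀ i : Fin (l+1), ∀ k,
      min (x k) (x' k) ≤ y i k ∧ y i k ≤ max (x k) (x' k) := by
    intro i k
    have hi : (i:ℕ) ≤ l := Nat.lt_succ_iff.mp i.2
    have hkey := hkey' i k
    have hl0 := hlast k
    have hsp := hIco k hi
    rcases hsign k with h | h
    · have h1 : 0 ≤ ∑ t ∈ Finset.range i.1, g k t := Finset.sum_nonneg fun t _ => h t
      have h2 : 0 ≤ ∑ t ∈ Finset.Ico i.1 l, g k t := Finset.sum_nonneg fun t _ => h t
      exact ⟨le_trans (min_le_left _ _) (by linarith),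
        le_trans (by linarith) (le_max_right _ _)⟩
    · have h1 : ∑ t ∈ Finset.range i.1, g k t ≤ 0 := Finset.sum_nonpos fun t _ => h t
      have h2 : ∑ t ∈ Finset.Ico i.1 l, g k t ≤ 0 := Finset.sum_nonpos fun t _ => h t
      exact ⟨le_trans (min_le_right _ _) (by linarith),
        le_trans (by linarith) (le_max_left _ _)⟩
  have hmem : ∀ i : Fin (l+1), y i ∈ B := by
    intro i
    rw [hB, Finset.mem_Icc]
    exact ⟨fun k => (hbound i k).1, fun k => (hbound i k).2⟩
  have hlt_ne : ∀ a b : Fin (l+1), a < b → y a ≠ y b := by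
    intro a b hlt
    have hb : (b:ℕ) ≤ l := Nat.lt_succ_iff.mp b.2
    have hal : (a:ℕ) < l := lt_of_lt_of_le hlt hb
    obtain ⟨k, hk⟩ := Function.ne_iff.mp (hnz ⟨a.1, hal⟩)
    have hgk : g k a.1 ≠ 0 := by simpa [hg, hal] using hk
    have hab : (a:ℕ) ≤ (b:ℕ) := le_of_lt hlt
    have hsp := hIco k hab
    have hamem : (a:ℕ) ∈ Finset.Ico (a:ℕ) (b:ℕ) := Finset.mem_Ico.mpr ⟨le_rfl, hlt⟩
    have hsplit2 : ∑ t ∈ Finset.Ico (a:ℕ) (b:ℕ), g k t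
        = g k a.1 + ∑ t ∈ (Finset.Ico (a:ℕ) (b:ℕ)).erase a.1, g k t :=
      (Finset.add_sum_erase _ (g k) hamem).symm
    have hne : ∑ t ∈ Finset.Ico (a:ℕ) (b:ℕ), g k t ≠ 0 := by
      rcases hsign k with h | h
      · have h2 : 0 ≤ ∑ t ∈ (Finset.Ico (a:ℕ) (b:ℕ)).erase a.1, g k t :=
          Finset.sum_nonneg fun t _ => h t
        have : 0 < g k a.1 := lt_of_le_of_ne (h a.1) (Ne.symm hgk)
        intro h0; rw [hsplit2] at h0; linarith
      · have h2 : ∑ t ∈ (Finset.Ico (a:ℕ) (b:ℕ)).erase a.1, g k t ≤ 0 :=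
          Finset.sum_nonpos fun t _ => h t
        have : g k a.1 < 0 := lt_of_le_of_ne (h a.1) hgk
        intro h0; rw [hsplit2] at h0; linarith
    intro heq
    apply hne
    have h1 := hkey' a k
    have h2 := hkey' b k
    rw [heq] at h1
    rw [h2, hsp] at h1
    linarith
  have hinj : Function.Injective y := by
    intro a b hab
    by_contra hne
    rcases lt_or_gt_of_ne hne with h | h
    · exact hlt_ne a b h hab
    · exact hlt_ne b a h hab.symm
  have hcard : (l + 1 : ℕ) ≤ B.card := by
    have := Finset.card_le_card_of_injOn (s := Finset.univ) y (fun i _ => hmem i) hinj.injOn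
    simpa using this
  have hBcard : B.card = ∏ k, (max (x k) (x' k) + 1 - min (x k) (x' k)).toNat := by
    rw [hB, Pi.card_Icc]
    exact Finset.prod_congr rfl fun k _ => Int.card_Icc _ _
  calc (l : ℤ) + 1 = ((l + 1 : ℕ) : ℤ) := by push_cast; ring
    _ ≤ (B.card : ℤ) := by exact_mod_cast hcard
    _ = ∏ k : Fin n, (|x' k - x k| + 1) := by
        rw [hBcard]
        push_cast
        refine Finset.prod_congr rfl fun k _ => ?_
        have h1 : max (x k) (x' k) - min (x k) (x' k) = |x' k - x k| := by
          rw [max_sub_min_eq_abs, abs_sub_comm]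
        have h2 : 0 ≤ max (x k) (x' k) + 1 - min (x k) (x' k) := by
          have := abs_nonneg (x' k - x k); linarith
        rw [Int.toNat_of_nonneg h2]
        linarith
end

section
/- Let (ℛ, ≺) be a regulatory structure conformal with a valid experiment graph (X, E_P ∪ E_R), where realizing sequences are monotone and each reaction has a strictly negative entry. Then |ℛ| ≤ ∑_{(x,x') ∈ E_R} ∑_{k=1}^{n} max(0, x_k - x'_k). -/
/-- The sequence `r` of reactions, with intermediate states `y`, is a monotone
realizing sequence for the response edge `(e.1, e.2)`. -/
def MonotoneRealizes {n l : ℕ} (e : (Fin n → ℤ) × (Fin n → ℤ))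
    (r : Fin l → Fin n → ℤ) (y : Fin (l + 1) → Fin n → ℤ) : Prop :=
  y 0 = e.1 ∧ y (Fin.last l) = e.2 ∧
  (∀ i : Fin l, y i.succ = y i.castSucc + r i) ∧
  (∀ i j : Fin l, ∀ k : Fin n, 0 ≤ r i k * r j k)

lemma telescope_aux {n l : ℕ} (r : Fin l → Fin n → ℤ) (y : Fin (l + 1) → Fin n → ℤ)
    (h : ∀ i : Fin l, y i.succ = y i.castSucc + r i) (k : Fin n) :
    ∀ m (hm : m ≤ l),
      y ⟨m, Nat.lt_succ_of_le hm⟩ k = y 0 k + ∑ i : Fin m, r (Fin.castLE hm i) k := by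
  intro m
  induction m with
  | zero => intro hm; simp
  | succ m ih =>
    intro hm
    have hm' : m ≤ l := Nat.le_of_succ_le hm
    have hlt : m < l := hm
    have h1 : (⟨m + 1, Nat.lt_succ_of_le hm⟩ : Fin (l + 1)) = Fin.succ ⟨m, hlt⟩ := rfl
    have h2 : (Fin.castSucc ⟨m, hlt⟩ : Fin (l + 1)) = ⟨m, Nat.lt_succ_of_le hm'⟩ := rfl
    have := congrFun (h ⟨m, hlt⟩) k
    rw [h1, this, Pi.add_apply, h2, ih hm', Fin.sum_univ_castSucc]
    have h3 : ∀ i : Fin m, Fin.castLE hm (Fin.castSucc i) = Fin.castLE hm' i := by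
      intro i; rfl
    have h4 : Fin.castLE hm (Fin.last m) = ⟨m, hlt⟩ := rfl
    simp only [h3, h4]
    ring

lemma telescope {n l : ℕ} (r : Fin l → Fin n → ℤ) (y : Fin (l + 1) → Fin n → ℤ)
    (h : ∀ i : Fin l, y i.succ = y i.castSucc + r i) (k : Fin n) :
    y (Fin.last l) k = y 0 k + ∑ i : Fin l, r i k := by
  have := telescope_aux r y h k l le_rfl
  have h0 : (Fin.last l) = (⟨l, Nat.lt_succ_of_le le_rfl⟩ : Fin (l + 1)) := rfl
  rw [h0, this]
  congr 1


lemma edge_bound {n l : ℕ} (e : (Fin n → ℤ) × (Fin n → ℤ))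
    (r : Fin l → Fin n → ℤ) (y : Fin (l + 1) → Fin n → ℤ)
    (h : MonotoneRealizes e r y)
    (hneg : ∀ i : Fin l, ∃ k : Fin n, r i k < 0) :
    (l : ℤ) ≤ ∑ k : Fin n, max 0 (e.1 k - e.2 k) := by
  classical
  obtain ⟨hy0, hyl, hstep, hmono⟩ := h
  choose c hc using hneg
  have hcard : (Finset.univ : Finset (Fin l)).card =
      ∑ k : Fin n, ((Finset.univ : Finset (Fin l)).filter (fun i => c i = k)).card :=
    Finset.card_eq_sum_card_fiberwise (fun i _ => Finset.mem_univ (c i))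
  have hl : (l : ℤ) = ∑ k : Fin n,
      (((Finset.univ : Finset (Fin l)).filter (fun i => c i = k)).card : ℤ) := by
    have := congrArg (fun m : ℕ => (m : ℤ)) hcard
    simpa using this
  rw [hl]
  apply Finset.sum_le_sum
  intro k _
  by_cases hfib : ((Finset.univ : Finset (Fin l)).filter (fun i => c i = k)).Nonempty
  · obtain ⟨i0, hi0⟩ := hfib
    have hi0k : c i0 = k := (Finset.mem_filter.mp hi0).2
    have hri0 : r i0 k < 0 := hi0k ▸ hc i0
    have hnonpos : ∀ j : Fin l, r j k ≤ 0 := by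
      intro j
      by_contra hpos
      push_neg at hpos
      have := hmono i0 j k
      nlinarith
    -- total change in coordinate k
    have htel : e.2 k = e.1 k + ∑ i : Fin l, r i k := by
      have := telescope r y hstep k
      rw [hy0, hyl] at this
      exact this
    have hsum : (((Finset.univ : Finset (Fin l)).filter (fun i => c i = k)).card : ℤ)
        ≤ ∑ i : Fin l, (-(r i k)) := by
      calc (((Finset.univ : Finset (Fin l)).filter (fun i => c i = k)).card : ℤ)
          = ∑ _i ∈ (Finset.univ : Finset (Fin l)).filter (fun i => c i = k), (1 : ℤ) := by simp
        _ ≤ ∑ i ∈ (Finset.univ : Finset (Fin l)).filter (fun i => c i = k), (-(r i k)) := by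
            apply Finset.sum_le_sum
            intro j hj
            have hjk : c j = k := (Finset.mem_filter.mp hj).2
            have := hc j
            rw [hjk] at this
            linarith
        _ ≤ ∑ i : Fin l, (-(r i k)) := by
            apply Finset.sum_le_sum_of_subset_of_nonneg (Finset.subset_univ _)
            intro j _ _
            linarith [hnonpos j]
    have hfin : ∑ i : Fin l, (-(r i k)) = e.1 k - e.2 k := by
      have : ∑ i : Fin l, (-(r i k)) = -(∑ i : Fin l, r i k) := by
        rw [Finset.sum_neg_distrib]
      rw [this]; linarith
    rw [hfin] at hsum
    exact hsum.trans (le_max_right 0 _)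
  · rw [Finset.not_nonempty_iff_eq_empty.mp hfib]
    simp only [Finset.card_empty, Nat.cast_zero]
    exact le_max_left 0 _

theorem card_reactions_le_total_decrease (n : ℕ)
    (R : Finset (Fin n → ℤ))
    (ER : Finset ((Fin n → ℤ) × (Fin n → ℤ)))
    (hneg : ∀ r ∈ R, ∃ k : Fin n, r k < 0)
    (L : (Fin n → ℤ) × (Fin n → ℤ) → ℕ)
    (σ : ∀ e : (Fin n → ℤ) × (Fin n → ℤ), Fin (L e) → Fin n → ℤ)
    (hVIII : ∀ e ∈ ER, ∃ y : Fin (L e + 1) → Fin n → ℤ,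
      MonotoneRealizes e (σ e) y ∧ ∀ i : Fin (L e), σ e i ∈ R)
    (hIX : ∀ r ∈ R, ∃ e ∈ ER, ∃ i : Fin (L e), σ e i = r) :
    (R.card : ℤ) ≤ ∑ e ∈ ER, ∑ k : Fin n, max 0 (e.1 k - e.2 k) := by
  classical
  choose E hE I hI using hIX
  have hstep1 : (R.card : ℤ) ≤ ∑ e ∈ ER, (L e : ℤ) := by
    have hcard : R.card ≤ (ER.sigma (fun e => (Finset.univ : Finset (Fin (L e))))).card := by
      rw [← Finset.card_attach]
      apply Finset.card_le_card_of_injOn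
        (fun p => (⟨E p.1 p.2, I p.1 p.2⟩ : Σ e : (Fin n → ℤ) × (Fin n → ℤ), Fin (L e)))
      · intro p _
        exact Finset.mem_sigma.mpr ⟨hE p.1 p.2, Finset.mem_univ _⟩
      · intro p1 _ p2 _ heq
        have := congrArg (fun q : Σ e : (Fin n → ℤ) × (Fin n → ℤ), Fin (L e) => σ q.1 q.2) heq
        simp only [hI p1.1 p1.2, hI p2.1 p2.2] at this
        exact Subtype.ext this
    have : (ER.sigma (fun e => (Finset.univ : Finset (Fin (L e))))).card
        = ∑ e ∈ ER, L e := by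
      rw [Finset.card_sigma]
      simp
    rw [this] at hcard
    calc (R.card : ℤ) ≤ ((∑ e ∈ ER, L e : ℕ) : ℤ) := by exact_mod_cast hcard
      _ = ∑ e ∈ ER, (L e : ℤ) := by push_cast; ring
  refine hstep1.trans (Finset.sum_le_sum ?_)
  intro e he
  obtain ⟨y, hmr, hmem⟩ := hVIII e he
  exact edge_bound e (σ e) y hmr (fun i => hneg (σ e i) (hmem i))
end
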